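/- Let A be an invertible n×n complex matrix with columns a_1,...,a_n ∈ ℂⁿ and let b_1,...,b_n be the rows of A⁻¹. Then the families {\overline{b_1^T},...,\overline{b_n^T}} and {a_1,...,a_n} form a bi-orthogonal pair in ℂⁿ, and there is an absolute constant c > 0 (independent of n and A) such that log n ≤ c · (max_{1≤k≤n} ‖b_k‖) · (max_{1≤k≤n} ‖∑_{j=1}^k a_j‖), where ‖·‖ is the Euclidean (ℓ²) norm on ℂⁿ. -/

import Mathlib

/-!
Put `S_k = a_1 + ⋯ + a_k` and `b_i = conj(row i of A⁻¹)`, so that `⟪b_i, S_k⟫ = [i ≤ k]`, and let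
`B`, `M` bound `‖b_i‖`, `‖S_k‖`. With `N = 2n`, `ζ = e^{2πi/N}` and the sawtooth
`g(t) = i (t/N - 1/2)`, consider `Q = ∑_{t<N} g(t) ⟪∑_i ζ^{it} b_i, ∑_k ζ^{kt} S_k⟫`.
Orthogonality of the characters `t ↦ ζ^{mt}` gives Parseval for these trigonometric sums, so
Cauchy–Schwarz and `|g| ≤ 1/2` bound `|Q| ≤ n² B M`. Expanding instead,
`Q = ∑_{i ≤ k} ĝ(k - i)` with `Re ĝ(m) = cot(π m / N) / 2 ≥ 0`, which is of size `n / m`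
for `1 ≤ m ≤ n / 2`; summing this harmonic series gives `Re Q ≳ n² log n`.
-/

open Complex Finset
open scoped Real

namespace IsPrimitiveRoot

variable {ζ : ℂ} {N : ℕ}

lemma star_pow_mul_pow (hζ : IsPrimitiveRoot ζ N) (hN : N ≠ 0) (i k : ℕ) :
    star (ζ ^ i) * ζ ^ k = ζ ^ ((k : ℤ) - i) := by
  rw [zpow_sub₀ (hζ.ne_zero hN), zpow_natCast, zpow_natCast, star_pow, Complex.star_def,
    ← inv_eq_conj (hζ.norm'_eq_one hN), inv_pow, div_eq_mul_inv, mul_comm]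

lemma sum_pow_zpow (hζ : IsPrimitiveRoot ζ N) {d : ℤ} (hd : |d| < N) :
    ∑ t ∈ range N, (ζ ^ d) ^ t = if d = 0 then (N : ℂ) else 0 := by
  split_ifs with h
  · simp [h]
  have hne : ζ ^ d ≠ 1 := fun h1 =>
    h (Int.eq_zero_of_abs_lt_dvd ((hζ.zpow_eq_one_iff_dvd d).1 h1) hd)
  have hpow : (ζ ^ d) ^ N = 1 := by
    rw [← zpow_natCast, ← zpow_mul, mul_comm, zpow_mul, zpow_natCast, hζ.pow_eq_one, one_zpow]
  rw [geom_sum_eq hne, hpow, sub_self, zero_div]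

end IsPrimitiveRoot

lemma sqrt_sum_norm_sq_le {F ι : Type*} [SeminormedAddCommGroup F] [Fintype ι] {B : ℝ}
    (hB : 0 ≤ B) {x : ι → F} (hx : ∀ i, ‖x i‖ ≤ B) :
    √(∑ i, ‖x i‖ ^ 2) ≤ √(Fintype.card ι) * B := by
  have hsum : ∑ i, ‖x i‖ ^ 2 ≤ Fintype.card ι * B ^ 2 := by
    calc ∑ i, ‖x i‖ ^ 2 ≤ ∑ _i : ι, B ^ 2 := sum_le_sum fun i _ => by gcongr; exact hx i
      _ = Fintype.card ι * B ^ 2 := by simp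
  calc √(∑ i, ‖x i‖ ^ 2) ≤ √(Fintype.card ι * B ^ 2) := Real.sqrt_le_sqrt hsum
    _ = √(Fintype.card ι) * B := by rw [Real.sqrt_mul (Nat.cast_nonneg _), Real.sqrt_sq hB]

section TrigPoly

variable {E : Type*} [NormedAddCommGroup E] [InnerProductSpace ℂ E] {n : ℕ}

def trigPoly (ζ : ℂ) (v : Fin n → E) (t : ℕ) : E := ∑ k : Fin n, (ζ ^ (k : ℕ)) ^ t • v k

variable {ζ : ℂ} {N : ℕ}

lemma IsPrimitiveRoot.sum_mul_inner_trigPoly (hζ : IsPrimitiveRoot ζ N) (hN : N ≠ 0)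
    (g : ℕ → ℂ) (x y : Fin n → E) :
    ∑ t ∈ range N, g t * inner ℂ (trigPoly ζ x t) (trigPoly ζ y t) =
      ∑ i : Fin n, ∑ k : Fin n,
        (∑ t ∈ range N, g t * (ζ ^ ((k : ℕ) - (i : ℤ))) ^ t) * inner ℂ (x i) (y k) := by
  simp only [trigPoly, sum_inner, inner_sum, inner_smul_left, inner_smul_right, mul_sum, sum_mul]
  simp_rw [sum_comm (s := range N)]
  rw [sum_comm]
  refine sum_congr rfl fun i _ => sum_congr rfl fun k _ => sum_congr rfl fun t _ => ?_
  rw [← hζ.star_pow_mul_pow hN, mul_pow, ← star_pow, ← pow_mul, ← pow_mul, starRingEnd_apply]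
  ring

lemma IsPrimitiveRoot.sum_norm_sq_trigPoly (hζ : IsPrimitiveRoot ζ N) (hnN : n ≤ N)
    (v : Fin n → E) :
    ∑ t ∈ range N, ‖trigPoly ζ v t‖ ^ 2 = N * ∑ k, ‖v k‖ ^ 2 := by
  rcases Nat.eq_zero_or_pos n with rfl | hn
  · simp [trigPoly]
  have hN : N ≠ 0 := by omega
  have h := hζ.sum_mul_inner_trigPoly hN 1 v v
  have hdiag : ∀ i k : Fin n, ∑ t ∈ range N, (ζ ^ ((k : ℕ) - (i : ℤ))) ^ t =
      if i = k then (N : ℂ) else 0 := fun i k => by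
    rw [hζ.sum_pow_zpow (by rw [abs_sub_lt_iff]; omega)]
    simp only [sub_eq_zero, Nat.cast_inj, Fin.val_inj, eq_comm]
  simp only [Pi.one_apply, one_mul, hdiag, ite_mul, zero_mul, sum_ite_eq, mem_univ, if_true,
    ← mul_sum, inner_self_eq_norm_sq_to_K] at h
  exact ofReal_injective (by push_cast; exact h)

lemma IsPrimitiveRoot.sum_norm_mul_norm_trigPoly_le (hζ : IsPrimitiveRoot ζ N) (hnN : n ≤ N)
    (x y : Fin n → E) :
    ∑ t ∈ range N, ‖trigPoly ζ x t‖ * ‖trigPoly ζ y t‖ ≤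
      N * (√(∑ i, ‖x i‖ ^ 2) * √(∑ k, ‖y k‖ ^ 2)) := by
  refine (Real.sum_mul_le_sqrt_mul_sqrt _ _ _).trans_eq ?_
  rw [hζ.sum_norm_sq_trigPoly hnN, hζ.sum_norm_sq_trigPoly hnN, Real.sqrt_mul (Nat.cast_nonneg _),
    Real.sqrt_mul (Nat.cast_nonneg _), mul_mul_mul_comm, Real.mul_self_sqrt (Nat.cast_nonneg _)]

end TrigPoly

lemma sub_one_mul_sum_range_mul_pow (x : ℂ) (N : ℕ) :
    (x - 1) * ∑ t ∈ range N, (t : ℂ) * x ^ t = (N - 1) * x ^ N + 1 - ∑ t ∈ range N, x ^ t := by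
  induction N with
  | zero => simp
  | succ N ih =>
    rw [sum_range_succ, sum_range_succ, mul_add, ih]
    push_cast
    ring

lemma sum_range_mul_pow_of_pow_eq_one {x : ℂ} {N : ℕ} (hx : x ≠ 1) (hxN : x ^ N = 1) :
    ∑ t ∈ range N, (t : ℂ) * x ^ t = N / (x - 1) := by
  have hgeom : ∑ t ∈ range N, x ^ t = 0 := by rw [geom_sum_eq hx, hxN, sub_self, zero_div]
  rw [eq_div_iff (sub_ne_zero.2 hx), mul_comm, sub_one_mul_sum_range_mul_pow, hxN, hgeom]
  ring

noncomputable def sawtooth (N t : ℕ) : ℂ := I * ((t / N - 1 / 2 : ℝ) : ℂ)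

lemma norm_sawtooth_le {N t : ℕ} (ht : t < N) : ‖sawtooth N t‖ ≤ 1 / 2 := by
  have hN : (0 : ℝ) < N := by exact_mod_cast (Nat.zero_le t).trans_lt ht
  have h1 : (t : ℝ) / N < 1 := (div_lt_one hN).2 (by exact_mod_cast ht)
  have h0 : 0 ≤ (t : ℝ) / N := by positivity
  rw [sawtooth, norm_mul, norm_I, one_mul, norm_real, Real.norm_eq_abs, abs_le]
  constructor <;> linarith

lemma sum_sawtooth_mul_pow {x : ℂ} {N : ℕ} (hN : N ≠ 0) (hx : x ≠ 1) (hxN : x ^ N = 1) :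
    ∑ t ∈ range N, sawtooth N t * x ^ t = I / (x - 1) := by
  have hgeom : ∑ t ∈ range N, x ^ t = 0 := by rw [geom_sum_eq hx, hxN, sub_self, zero_div]
  have hsplit : ∀ t, sawtooth N t * x ^ t = I / N * ((t : ℂ) * x ^ t) - I / 2 * x ^ t := by
    intro t
    simp only [sawtooth]
    push_cast
    ring
  have hN' : (N : ℂ) ≠ 0 := Nat.cast_ne_zero.2 hN
  simp only [hsplit, sum_sub_distrib, ← mul_sum, sum_range_mul_pow_of_pow_eq_one hx hxN, hgeom,
    mul_zero, sub_zero]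
  field_simp

lemma re_I_div_exp_mul_I_sub_one (φ : ℝ) :
    (I / (exp (φ * I) - 1)).re = Real.sin φ / (2 * (1 - Real.cos φ)) := by
  have hnormSq : normSq (exp (φ * I) - 1) = 2 * (1 - Real.cos φ) := by
    rw [normSq_apply, sub_re, sub_im, exp_ofReal_mul_I_re, exp_ofReal_mul_I_im, one_re, one_im]
    nlinarith [Real.sin_sq_add_cos_sq φ]
  rw [div_re, hnormSq, sub_im, exp_ofReal_mul_I_im, one_im]
  simp

lemma div_le_sin_div_one_sub_cos {φ : ℝ} (h0 : 0 < φ) (hφ : φ ≤ π / 2) :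
    4 / (π * φ) ≤ Real.sin φ / (1 - Real.cos φ) := by
  have hpos : 0 < 1 - Real.cos φ := by
    have := Real.cos_le_one_sub_mul_cos_sq (x := φ) (by rw [abs_of_pos h0]; linarith)
    have : 0 < 2 / π ^ 2 * φ ^ 2 := by positivity
    linarith
  rw [div_le_div_iff₀ (by positivity) hpos]
  calc 4 * (1 - Real.cos φ) ≤ 4 * (φ ^ 2 / 2) := by
        linarith [Real.one_sub_sq_div_two_le_cos (x := φ)]
    _ = 2 / π * φ * (π * φ) := by field_simp; norm_num
    _ ≤ Real.sin φ * (π * φ) := by gcongr; exact Real.mul_le_sin h0.le hφ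

noncomputable def sawtoothCoeff (N : ℕ) (m : ℤ) : ℂ :=
  ∑ t ∈ range N, sawtooth N t * (exp (2 * π * I / N) ^ m) ^ t

lemma sawtoothCoeff_zero_re (N : ℕ) : (sawtoothCoeff N 0).re = 0 := by
  simp [sawtoothCoeff, sawtooth, re_sum]

lemma sawtoothCoeff_natCast_re {N m : ℕ} (hm : 0 < m) (hmN : m < N) :
    (sawtoothCoeff N m).re =
      Real.sin (2 * π * m / N) / (2 * (1 - Real.cos (2 * π * m / N))) := by
  have hN : N ≠ 0 := by omega
  have hζ := isPrimitiveRoot_exp N hN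
  have hexp : exp (2 * π * I / N) ^ m = exp ((2 * π * m / N : ℝ) * I) := by
    rw [← exp_nat_mul]
    push_cast
    ring_nf
  rw [sawtoothCoeff, zpow_natCast, sum_sawtooth_mul_pow hN (hζ.pow_ne_one_of_pos_of_lt hm.ne' hmN)
    (by rw [pow_right_comm, hζ.pow_eq_one, one_pow]), hexp, re_I_div_exp_mul_I_sub_one]

lemma sawtoothCoeff_natCast_re_nonneg {N m : ℕ} (hm : 2 * m < N) :
    0 ≤ (sawtoothCoeff N m).re := by
  rcases Nat.eq_zero_or_pos m with rfl | hm0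
  · simp [sawtoothCoeff_zero_re]
  have hN : (0 : ℝ) < N := by exact_mod_cast (Nat.zero_le _).trans_lt hm
  rw [sawtoothCoeff_natCast_re hm0 (by omega)]
  have hφ : 2 * π * m / N < π := by
    rw [div_lt_iff₀ hN]
    have : (2 * m : ℝ) < N := by exact_mod_cast hm
    nlinarith [Real.pi_pos]
  exact div_nonneg (Real.sin_pos_of_pos_of_lt_pi (by positivity) hφ).le
    (by linarith [Real.cos_le_one (2 * π * m / N)])

lemma div_le_sawtoothCoeff_natCast_re {N m : ℕ} (hm : 0 < m) (hmN : 4 * m ≤ N) :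
    N / (π ^ 2 * m) ≤ (sawtoothCoeff N m).re := by
  have hN : (0 : ℝ) < N := by exact_mod_cast (show 0 < N by omega)
  have hm' : (0 : ℝ) < m := by exact_mod_cast hm
  have hφ : 2 * π * m / N ≤ π / 2 := by
    rw [div_le_div_iff₀ hN two_pos]
    have : (4 * m : ℝ) ≤ N := by exact_mod_cast hmN
    nlinarith [Real.pi_pos]
  have key := div_le_sin_div_one_sub_cos (by positivity) hφ
  rw [sawtoothCoeff_natCast_re hm (by omega)]
  calc (N : ℝ) / (π ^ 2 * m) = 4 / (π * (2 * π * m / N)) / 2 := by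
        field_simp
        ring
    _ ≤ Real.sin (2 * π * m / N) / (1 - Real.cos (2 * π * m / N)) / 2 := by gcongr
    _ = _ := by rw [div_div, mul_comm (1 - _)]

lemma sum_Icc_le_sum_sum_ite_le {n : ℕ} (f : ℕ → ℝ) (hf : ∀ m < n, 0 ≤ f m) (p : ℕ) :
    ((n - p : ℕ) : ℝ) * ∑ m ∈ Icc 1 p, f m ≤
      ∑ i : Fin n, ∑ k : Fin n, if i ≤ k then f (k - i) else 0 := by
  have hrow : ∀ i : Fin n, ∑ k : Fin n, (if i ≤ k then f (k - i) else 0) =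
      ∑ m ∈ range (n - i), f m := fun i => by
    have hIco : (range n).filter (fun k => (i : ℕ) ≤ k) = Ico (i : ℕ) n := by
      ext k
      simp only [mem_filter, mem_range, mem_Ico]
      omega
    simp only [Fin.le_def]
    rw [Fin.sum_univ_eq_sum_range (fun k => if (i : ℕ) ≤ k then f (k - i) else 0), ← sum_filter,
      hIco, sum_Ico_eq_sum_range]
    simp only [Nat.add_sub_cancel_left]
  have hrange : ∀ i, ∀ m ∈ range (n - i), 0 ≤ f m := fun i m hm =>
    hf m (by rw [mem_range] at hm; omega)
  rw [sum_congr rfl fun i _ => hrow i,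
    Fin.sum_univ_eq_sum_range (fun i => ∑ m ∈ range (n - i), f m)]
  calc ((n - p : ℕ) : ℝ) * ∑ m ∈ Icc 1 p, f m = ∑ _i ∈ range (n - p), ∑ m ∈ Icc 1 p, f m := by
        rw [sum_const, card_range, nsmul_eq_mul]
    _ ≤ ∑ i ∈ range (n - p), ∑ m ∈ range (n - i), f m := by
        refine sum_le_sum fun i hi => sum_le_sum_of_subset_of_nonneg (fun m hm => ?_)
          fun m hm _ => hrange i m hm
        rw [mem_range] at hi ⊢
        rw [mem_Icc] at hm
        omega
    _ ≤ ∑ i ∈ range n, ∑ m ∈ range (n - i), f m :=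
        sum_le_sum_of_subset_of_nonneg (range_subset_range.2 (Nat.sub_le n p))
          fun i _ _ => sum_nonneg (hrange i)

lemma log_le_two_mul_sum_Icc_inv (n : ℕ) : Real.log n ≤ 2 * ∑ m ∈ Icc 1 (n / 2), (m : ℝ)⁻¹ := by
  have hharm : Real.log ((n / 2 : ℕ) + 1) ≤ ∑ m ∈ Icc 1 (n / 2), (m : ℝ)⁻¹ := by
    have := log_add_one_le_harmonic (n / 2)
    rw [harmonic_eq_sum_Icc] at this
    push_cast at this ⊢
    exact this
  have hsq : Real.log n ≤ 2 * Real.log ((n / 2 : ℕ) + 1) := by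
    rcases n.eq_zero_or_pos with rfl | hn
    · simp only [CharP.cast_eq_zero, Real.log_zero]
      positivity
    have h1 : n ≤ 2 * (n / 2) + 1 := by omega
    have := Real.log_le_log (by positivity)
      (show (n : ℝ) ≤ ((n / 2 : ℕ) + 1) ^ 2 by exact_mod_cast (show n ≤ (n / 2 + 1) ^ 2 by nlinarith))
    rwa [Real.log_pow, Nat.cast_ofNat] at this
  linarith

lemma sq_mul_log_le_sum_sawtoothCoeff_re (n : ℕ) :
    (n : ℝ) ^ 2 * Real.log n / (2 * π ^ 2) ≤
      ∑ i : Fin n, ∑ k : Fin n, if i ≤ k then (sawtoothCoeff (2 * n) (k - i : ℕ)).re else 0 := by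
  have hcoeff : ∀ m ∈ Icc 1 (n / 2), 2 * n / π ^ 2 * (m : ℝ)⁻¹ ≤
      (sawtoothCoeff (2 * n) (m : ℕ)).re := fun m hm => by
    rw [mem_Icc] at hm
    convert div_le_sawtoothCoeff_natCast_re (N := 2 * n) hm.1 (by omega) using 1
    push_cast
    ring
  have hhalf : (n : ℝ) / 2 ≤ ((n - n / 2 : ℕ) : ℝ) := by
    rw [div_le_iff₀ two_pos]
    exact_mod_cast (show n ≤ (n - n / 2) * 2 by omega)
  refine le_trans ?_ (sum_Icc_le_sum_sum_ite_le (fun m => (sawtoothCoeff (2 * n) (m : ℕ)).re)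
    (fun m hm => sawtoothCoeff_natCast_re_nonneg (by omega)) (n / 2))
  calc (n : ℝ) ^ 2 * Real.log n / (2 * π ^ 2)
      = (n / 2) * (2 * n / π ^ 2 * (Real.log n / 2)) := by ring
    _ ≤ (n / 2) * (2 * n / π ^ 2 * ∑ m ∈ Icc 1 (n / 2), (m : ℝ)⁻¹) := by
        gcongr
        linarith [log_le_two_mul_sum_Icc_inv n]
    _ ≤ ((n - n / 2 : ℕ) : ℝ) * ∑ m ∈ Icc 1 (n / 2), (sawtoothCoeff (2 * n) (m : ℕ)).re := by
        rw [mul_sum]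
        gcongr with m hm
        exact hcoeff m hm

theorem log_le_of_inner_eq_ite_le {E : Type*} [NormedAddCommGroup E] [InnerProductSpace ℂ E]
    {n : ℕ} (hn : 0 < n) (b S : Fin n → E) {B M : ℝ}
    (hb : ∀ i, ‖b i‖ ≤ B) (hS : ∀ k, ‖S k‖ ≤ M)
    (horth : ∀ i k, inner ℂ (b i) (S k) = if i ≤ k then (1 : ℂ) else 0) :
    Real.log n ≤ 2 * π ^ 2 * (B * M) := by
  have hB : 0 ≤ B := (norm_nonneg _).trans (hb ⟨0, hn⟩)
  have hM : 0 ≤ M := (norm_nonneg _).trans (hS ⟨0, hn⟩)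
  have hN : 2 * n ≠ 0 := by omega
  set ζ := exp (2 * π * I / (2 * n : ℕ))
  have hζ : IsPrimitiveRoot ζ (2 * n) := isPrimitiveRoot_exp _ hN
  set Q := ∑ t ∈ range (2 * n), sawtooth (2 * n) t * inner ℂ (trigPoly ζ b t) (trigPoly ζ S t)
  have hQ : Q.re = ∑ i : Fin n, ∑ k : Fin n,
      if i ≤ k then (sawtoothCoeff (2 * n) (k - i : ℕ)).re else 0 := by
    simp only [Q, hζ.sum_mul_inner_trigPoly hN, horth, mul_ite, mul_one, mul_zero, re_sum]
    refine sum_congr rfl fun i _ => sum_congr rfl fun k _ => ?_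
    split_ifs with hik
    · rw [sawtoothCoeff, Nat.cast_sub (Fin.le_def.1 hik)]
    · rfl
  have hupper : Q.re ≤ n ^ 2 * (B * M) := by
    calc Q.re ≤ ‖Q‖ := re_le_norm Q
      _ ≤ ∑ t ∈ range (2 * n), 1 / 2 * (‖trigPoly ζ b t‖ * ‖trigPoly ζ S t‖) :=
        (norm_sum_le _ _).trans <| sum_le_sum fun t ht => by
          rw [norm_mul]
          gcongr
          · exact norm_sawtooth_le (mem_range.1 ht)
          · exact norm_inner_le_norm _ _
      _ ≤ 1 / 2 * ((2 * n : ℕ) * (√n * B * (√n * M))) := by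
        rw [← mul_sum]
        gcongr
        refine (hζ.sum_norm_mul_norm_trigPoly_le (by omega) b S).trans ?_
        gcongr
        · simpa using sqrt_sum_norm_sq_le hB hb
        · simpa using sqrt_sum_norm_sq_le hM hS
      _ = n ^ 2 * (B * M) := by
        rw [mul_mul_mul_comm, Real.mul_self_sqrt (Nat.cast_nonneg _)]
        push_cast
        ring
  have hlog := (hQ ▸ sq_mul_log_le_sum_sawtoothCoeff_re n).trans hupper
  rw [mul_div_assoc] at hlog
  have := le_of_mul_le_mul_left hlog (by positivity)
  rwa [div_le_iff₀ (by positivity), mul_comm] at this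

lemma inner_sum_Iic_eq_ite {E ι : Type*} [NormedAddCommGroup E] [InnerProductSpace ℂ E]
    [LinearOrder ι] [LocallyFiniteOrderBot ι] {b a : ι → E}
    (h : ∀ i j, inner ℂ (b i) (a j) = if i = j then (1 : ℂ) else 0) (i k : ι) :
    inner ℂ (b i) (∑ j ∈ Iic k, a j) = if i ≤ k then (1 : ℂ) else 0 := by
  simp only [inner_sum, h, sum_ite_eq, mem_Iic]

lemma Matrix.inner_star_row_inv_col {ι 𝕜 : Type*} [Fintype ι] [DecidableEq ι] [RCLike 𝕜]
    {A : Matrix ι ι 𝕜} (hA : IsUnit A.det) (i k : ι) :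
    inner 𝕜 ((WithLp.equiv 2 (ι → 𝕜)).symm fun j => star (A⁻¹ i j))
      ((WithLp.equiv 2 (ι → 𝕜)).symm fun j => A j k) = if i = k then 1 else 0 := by
  rw [← one_apply, ← nonsing_inv_mul A hA, mul_apply, PiLp.inner_apply]
  simp [mul_comm]

lemma EuclideanSpace.norm_star {ι 𝕜 : Type*} [Fintype ι] [RCLike 𝕜] (v : ι → 𝕜) :
    ‖(WithLp.equiv 2 (ι → 𝕜)).symm fun j => star (v j)‖ = ‖(WithLp.equiv 2 (ι → 𝕜)).symm v‖ := by
  simp [EuclideanSpace.norm_eq]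

/-- Matrix application: for an invertible `n × n` complex matrix `A` with columns
`aₖ = A · eₖ` and rows `bᵢ` of `A⁻¹`, the families `{conj(bᵢᵀ)}` and `{aₖ}` are a
bi-orthogonal pair in `ℂⁿ`, and there is an absolute `c > 0` with
`log n ≤ c · maxₖ ‖bₖ‖ · maxₖ ‖∑_{j≤k} aⱼ‖` in the Euclidean norm. -/
theorem stmt15 :
    ∃ c : ℝ, 0 < c ∧
      ∀ (n : ℕ) (hn : 2 ≤ n) (A : Matrix (Fin n) (Fin n) ℂ),
        IsUnit A.det →
        (∀ i k : Fin n,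
          (inner ℂ ((WithLp.equiv 2 (Fin n → ℂ)).symm (fun j => star (A⁻¹ i j)))
                 ((WithLp.equiv 2 (Fin n → ℂ)).symm (fun j => A j k)) : ℂ)
            = if i = k then 1 else 0) ∧
        Real.log n ≤
          c * ((Finset.univ : Finset (Fin n)).sup'
                ⟨⟨0, by omega⟩, Finset.mem_univ _⟩ fun k =>
                  ‖(WithLp.equiv 2 (Fin n → ℂ)).symm (fun j => A⁻¹ k j)‖)
            * ((Finset.univ : Finset (Fin n)).sup'
                ⟨⟨0, by omega⟩, Finset.mem_univ _⟩ fun k =>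
                  ‖∑ j ∈ Finset.Iic k,
                    (WithLp.equiv 2 (Fin n → ℂ)).symm (fun i => A i j)‖) := by
  refine ⟨2 * π ^ 2, by positivity, fun n hn A hA => ?_⟩
  have hbiorth := Matrix.inner_star_row_inv_col hA
  refine ⟨hbiorth, ?_⟩
  rw [mul_assoc]
  refine log_le_of_inner_eq_ite_le (by omega) _ _ (fun i => ?_)
    (fun k => le_sup' (fun k => ‖∑ j ∈ Iic k, _‖) (mem_univ k)) (inner_sum_Iic_eq_ite hbiorth)
  exact (EuclideanSpace.norm_star _).trans_le <|
    le_sup' (fun k => ‖(WithLp.equiv 2 (Fin n → ℂ)).symm fun j => A⁻¹ k j‖) (mem_univ i)
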